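/- Let D be an integral domain and ⋆ a semistar operation on D. The following are equivalent: (i) D is a ⋆-domain; (ii) ⋆ is a.b. and (E·F^{-1})^⋆ = (E^⋆ : F) for all F ∈ f(D) and E ∈ F̄(D); (iii) D is quasi-⋆-integrally closed and (E·F^{-1})^⋆ = (E^⋆ : F) for all F ∈ f(D) and E ∈ F̄(D). The analogous equivalences hold with 'P⋆MD' in place of '⋆-domain' and with (E·F^{-1})^{⋆_f} = (E^{⋆_f} : F) in place of (E·F^{-1})^⋆ = (E^⋆ : F). -/

import Mathlib

open Submodule

namespace Semistar

/-- A semistar operation on an integral domain `D` with quotient field `K`: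
a map on `D`-submodules of `K` satisfying the semistar axioms on nonzero submodules. -/
structure SemistarOp (D K : Type*) [CommRing D] [Field K] [Algebra D K] where
  star : Submodule D K → Submodule D K
  star_smul_mul : ∀ x : K, x ≠ 0 → ∀ E : Submodule D K, E ≠ ⊥ →
    star (span D {x} * E) = span D {x} * star E
  star_mono : ∀ E F : Submodule D K, E ≠ ⊥ → F ≠ ⊥ → E ≤ F → star E ≤ star F
  le_star : ∀ E : Submodule D K, E ≠ ⊥ → E ≤ star E
  star_star : ∀ E : Submodule D K, E ≠ ⊥ → star (star E) = star E

variable {D K : Type*} [CommRing D] [Field K] [Algebra D K]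

/-- The finite-type semistar operation `⋆_f` associated to `⋆`. -/
def finStar (t : Submodule D K → Submodule D K) : Submodule D K → Submodule D K :=
  fun E => ⨆ F ∈ {F : Submodule D K | F ≠ ⊥ ∧ F.FG ∧ F ≤ E}, t F

/-- The image in `K` of an ideal of `D`. -/
def idealToK (I : Ideal D) : Submodule D K :=
  Submodule.map (Algebra.linearMap D K) I

/-- `I` is a quasi-`⋆`-ideal: a nonzero ideal of `D` with `I^⋆ ∩ D = I`. -/
def IsQuasiIdeal (t : Submodule D K → Submodule D K) (I : Ideal D) : Prop :=
  I ≠ ⊥ ∧ t (idealToK I) ⊓ 1 = idealToK I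

/-- `M` is a quasi-`⋆`-maximal ideal: maximal among quasi-`⋆`-ideals. -/
def IsQuasiMaximal (t : Submodule D K → Submodule D K) (M : Ideal D) : Prop :=
  IsQuasiIdeal t M ∧ ∀ J : Ideal D, IsQuasiIdeal t J → M ≤ J → M = J

/-- The localization `E·D_M` of a submodule `E` of `K` at (the complement of) an ideal `M`. -/
def locAt (M : Ideal D) (E : Submodule D K) : Submodule D K where
  carrier := {x : K | ∃ s ∈ Submonoid.closure ((M : Set D)ᶜ), s • x ∈ E}
  add_mem' := by
    rintro x y ⟨s, hs, hsx⟩ ⟨t, ht, hty⟩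
    refine ⟨s * t, mul_mem hs ht, ?_⟩
    have h1 : (s * t) • x ∈ E := by rw [mul_comm, mul_smul]; exact E.smul_mem t hsx
    have h2 : (s * t) • y ∈ E := by rw [mul_smul]; exact E.smul_mem s hty
    rw [smul_add]; exact E.add_mem h1 h2
  zero_mem' := ⟨1, Submonoid.one_mem _, by simp⟩
  smul_mem' := by
    rintro c x ⟨s, hs, hsx⟩
    exact ⟨s, hs, by rw [smul_comm]; exact E.smul_mem c hsx⟩

/-- The spectral semistar operation `⋆̃` associated to `⋆`, defined by
`E^⋆̃ = ⋂ { E·D_M : M quasi-`⋆_f`-maximal }`. -/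
def tildeStar (s : SemistarOp D K) : Submodule D K → Submodule D K :=
  fun E => ⨅ M ∈ {M : Ideal D | IsQuasiMaximal (finStar s.star) M}, locAt M E

/-- The localizing system `F^⋆` of ideals `I` with `I^⋆ = D^⋆`. -/
def starLS (s : SemistarOp D K) : Set (Ideal D) :=
  {I : Ideal D | I ≠ ⊥ ∧ s.star (idealToK I) = s.star 1}

/-- The stable semistar operation `⋆̄` associated to `⋆`:
`E^⋆̄ = ⋃ {(E : J) : J ∈ F^⋆}`. -/
def barStar (s : SemistarOp D K) : Submodule D K → Submodule D K :=
  fun E => ⨆ J ∈ starLS s, E / idealToK J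

/-- `I` is `⋆`-invertible: `(I·I⁻¹)^⋆ = D^⋆`. -/
def IsStarInvertible (t : Submodule D K → Submodule D K) (I : Submodule D K) : Prop :=
  t (I * (1 / I)) = t 1

/-- `D` is a `⋆`-domain: every nonzero finitely generated `D`-submodule of `K`
is `⋆`-invertible. -/
def IsStarDomain (t : Submodule D K → Submodule D K) : Prop :=
  ∀ I : Submodule D K, I ≠ ⊥ → I.FG → IsStarInvertible t I

/-- `D` is a Prüfer `⋆`-multiplication domain: every nonzero finitely generated
ideal of `D` is `⋆_f`-invertible. -/
def IsPMD (t : Submodule D K → Submodule D K) : Prop :=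
  ∀ I : Submodule D K, I ≠ ⊥ → I.FG → I ≤ 1 → IsStarInvertible (finStar t) I

/-- `D` is a P⋆MD for the semistar operation `s`. -/
abbrev IsPStarMD (s : SemistarOp D K) : Prop := IsPMD s.star

/-- Equality of two semistar operations (as maps on nonzero submodules):
`D` is a `(∗₁, ∗₂)`-domain. -/
def StarEq (t₁ t₂ : Submodule D K → Submodule D K) : Prop :=
  ∀ E : Submodule D K, E ≠ ⊥ → t₁ E = t₂ E

/-- `⋆` is a.b. -/
def IsAB (t : Submodule D K → Submodule D K) : Prop :=
  ∀ E : Submodule D K, E ≠ ⊥ → E.FG → ∀ F G : Submodule D K, F ≠ ⊥ → G ≠ ⊥ →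
    t (E * F) ≤ t (E * G) → t F ≤ t G

/-- `⋆` is e.a.b. -/
def IsEAB (t : Submodule D K → Submodule D K) : Prop :=
  ∀ E F G : Submodule D K, E ≠ ⊥ → E.FG → F ≠ ⊥ → F.FG → G ≠ ⊥ → G.FG →
    t (E * F) ≤ t (E * G) → t F ≤ t G

/-- `D` is quasi-`⋆`-integrally closed: `D^⋆ = ⋃ {(F^⋆ : F^⋆) : F ∈ f(D)}`. -/
def IsQuasiStarIntegrallyClosed (t : Submodule D K → Submodule D K) : Prop :=
  (t 1 : Set K) = ⋃ F ∈ {F : Submodule D K | F ≠ ⊥ ∧ F.FG}, ((t F / t F : Submodule D K) : Set K)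

/-- The submodule `S` of `K` is integrally closed in `K`. -/
def IsIntegrallyClosedIn (S : Submodule D K) : Prop :=
  ∀ x : K, (∃ p : Polynomial K, p.Monic ∧ (∀ i, p.coeff i ∈ S) ∧ Polynomial.eval x p = 0) → x ∈ S

/-- `D` is `⋆`-Noetherian: ACC on quasi-`⋆`-ideals. -/
def IsStarNoetherian (t : Submodule D K → Submodule D K) : Prop :=
  ∀ c : ℕ → Ideal D, (∀ n, IsQuasiIdeal t (c n)) → Monotone c →
    ∃ n, ∀ m, n ≤ m → c m = c n

/-- `D` is `⋆`-extracoherent. -/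
def IsExtraCoherent (t : Submodule D K → Submodule D K) : Prop :=
  ∀ E F : Submodule D K, E ≠ ⊥ → E.FG → F ≠ ⊥ → F.FG → E ⊓ F ≠ ⊥ →
    ∃ J : Submodule D K, J ≠ ⊥ ∧ J.FG ∧ J ≤ E ⊓ F ∧ t J = t E ⊓ t F

/-- `D` is truly `⋆`-coherent. -/
def IsTrulyCoherent (t : Submodule D K → Submodule D K) : Prop :=
  ∀ E F : Submodule D K, E ≠ ⊥ → E.FG → F ≠ ⊥ → F.FG → E ⊓ F ≠ ⊥ →
    ∃ J : Submodule D K, J ≠ ⊥ ∧ J.FG ∧ t J = t (E ⊓ F)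

/-- `D` is `⋆`-coherent. -/
def IsCoherent (t : Submodule D K → Submodule D K) : Prop :=
  ∀ E F : Submodule D K, E ≠ ⊥ → E.FG → F ≠ ⊥ → F.FG → E ⊓ F ≠ ⊥ →
    ∃ J : Submodule D K, J ≠ ⊥ ∧ J.FG ∧ t J = t E ⊓ t F

/-- `D` is `⋆`-quasi-coherent. -/
def IsQuasiCoherent (t : Submodule D K → Submodule D K) : Prop :=
  ∀ F : Submodule D K, F ≠ ⊥ → F.FG →
    ∃ G : Submodule D K, G ≠ ⊥ ∧ G.FG ∧ t ((1 : Submodule D K) / F) = t G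

/-- `D` is an `H(⋆)`-domain. -/
def IsHDomain (t : Submodule D K → Submodule D K) : Prop :=
  ∀ I : Ideal D, I ≠ ⊥ → t (idealToK I) = t 1 →
    ∃ J : Ideal D, J ≠ ⊥ ∧ J.FG ∧ J ≤ I ∧ t (idealToK J) = t 1

/-- `D` is an `I(⋆)`-domain. -/
def IsIDomain (s : SemistarOp D K) : Prop :=
  ∀ I : Submodule D K, I ≠ ⊥ → I.FG → I ≤ 1 →
    (IsStarInvertible s.star I ↔ IsStarInvertible (finStar s.star) I)


/-!
For `F ≠ 0` with `F⁻¹ ≠ 0`, `⋆`-invertibility of `F` is equivalent to the formula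
`(E·F⁻¹)^⋆ = (E^⋆ : F)` for all `E`: take `E = F` in one direction; in the other, `xF ⊆ E^⋆`
gives `x ∈ x(F·F⁻¹)^⋆ ⊆ (E^⋆·F⁻¹)^⋆ = (E·F⁻¹)^⋆`. Multiplying by `F⁻¹` cancels a `⋆`-invertible
`F`, so a `⋆`-domain is a.b.; and a.b. gives quasi-`⋆`-integral closure by cancelling `F` in
`(xF)^⋆ ⊆ F^⋆`. The P⋆MD statements are the same statements for the semistar operation `⋆_f`:
a finitely generated fractional ideal can be scaled into `D`, and `⋆_f`-invertibility implies
`⋆`-invertibility.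
-/

section SubmoduleQuotient

variable {R A : Type*} [CommSemiring R] [CommSemiring A] [Algebra R A]

theorem _root_.Submodule.div_mul_le (I J : Submodule R A) : I / J * J ≤ I :=
  Submodule.le_div_iff_mul_le.mp le_rfl

theorem _root_.Submodule.div_units_mul (u : (Submodule R A)ˣ) (I J : Submodule R A) :
    J / (↑u * I) = ↑u⁻¹ * (J / I) := by
  apply le_antisymm
  · have hu : ↑u * (J / (u * I)) ≤ J / I := by
      rw [Submodule.le_div_iff_mul_le]
      calc ↑u * (J / (u * I)) * I = J / (u * I) * (u * I) := by ring
        _ ≤ J := div_mul_le J _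
    calc J / (u * I) = ↑u⁻¹ * (↑u * (J / (u * I))) := by rw [← mul_assoc, u.inv_mul, one_mul]
      _ ≤ ↑u⁻¹ * (J / I) := by gcongr
  · rw [Submodule.le_div_iff_mul_le]
    calc ↑u⁻¹ * (J / I) * (↑u * I) = ↑u⁻¹ * ↑u * (J / I * I) := by ring
      _ ≤ J := by rw [u.inv_mul, one_mul]; exact div_mul_le J I

theorem _root_.Submodule.units_mul_mul_one_div (u : (Submodule R A)ˣ) (I : Submodule R A) :
    ↑u * I * (1 / (↑u * I)) = I * (1 / I) := by
  rw [div_units_mul]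
  calc ↑u * I * (↑u⁻¹ * (1 / I)) = ↑u * ↑u⁻¹ * (I * (1 / I)) := by ring
    _ = I * (1 / I) := by rw [u.mul_inv, one_mul]

end SubmoduleQuotient

theorem span_singleton_ne_bot {x : K} (hx : x ≠ 0) : (span D {x} : Submodule D K) ≠ ⊥ :=
  span_singleton_eq_bot.not.mpr hx

theorem mul_ne_bot {A B : Submodule D K} (hA : A ≠ ⊥) (hB : B ≠ ⊥) : A * B ≠ ⊥ :=
  mul_eq_bot.not.mpr (not_or.mpr ⟨hA, hB⟩)

theorem one_ne_bot : (1 : Submodule D K) ≠ ⊥ :=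
  (Submodule.ne_bot_iff _).mpr ⟨1, one_le.mp le_rfl, one_ne_zero⟩

theorem one_div_ne_bot [IsDomain D] [IsFractionRing D K] {F : Submodule D K} (hF : F.FG) :
    (1 / F : Submodule D K) ≠ ⊥ := by
  obtain ⟨a, ha, hint⟩ := FractionalIdeal.isFractional_of_fg (S := nonZeroDivisors D) hF
  refine (Submodule.ne_bot_iff _).mpr ⟨algebraMap D K a, fun y hy => ?_,
    IsFractionRing.to_map_ne_zero_of_mem_nonZeroDivisors ha⟩
  obtain ⟨d, hd⟩ := hint y hy
  exact mem_one.mpr ⟨d, by rw [hd, Algebra.smul_def]⟩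

def spanSingletonUnit {x : K} (hx : x ≠ 0) : (Submodule D K)ˣ where
  val := span D {x}
  inv := span D {x⁻¹}
  val_inv := by rw [span_mul_span, Set.singleton_mul_singleton, mul_inv_cancel₀ hx, one_eq_span]
  inv_val := by rw [span_mul_span, Set.singleton_mul_singleton, inv_mul_cancel₀ hx, one_eq_span]

theorem span_singleton_mul_span_singleton_inv_mul {x : K} (hx : x ≠ 0) (M : Submodule D K) :
    span D {x} * (span D {x⁻¹} * M) = M :=
  (spanSingletonUnit hx).mul_inv_cancel_left M

theorem span_singleton_inv_mul_span_singleton_mul {x : K} (hx : x ≠ 0) (M : Submodule D K) :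
    span D {x⁻¹} * (span D {x} * M) = M :=
  (spanSingletonUnit hx).inv_mul_cancel_left M

namespace SemistarOp

variable (s : SemistarOp D K)

theorem star_ne_bot {E : Submodule D K} (hE : E ≠ ⊥) : s.star E ≠ ⊥ :=
  fun h => hE (le_bot_iff.mp (h ▸ s.le_star E hE))

theorem one_mem_star_one : (1 : K) ∈ s.star 1 :=
  s.le_star 1 one_ne_bot (one_le.mp le_rfl)

theorem star_mul_le {A B : Submodule D K} (hA : A ≠ ⊥) (hB : B ≠ ⊥) :
    s.star A * B ≤ s.star (A * B) := by
  rw [mul_comm, Submodule.mul_le]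
  intro b hb a ha
  rcases eq_or_ne b 0 with rfl | hb0
  · simp
  have hbA : span D {b} * A ≤ A * B := by
    rw [mul_comm A B]
    gcongr
    exact (span_singleton_le_iff_mem b B).mpr hb
  have hmem : b * a ∈ s.star (span D {b} * A) := by
    rw [s.star_smul_mul b hb0 A hA]
    exact mul_mem_mul (mem_span_singleton_self b) ha
  exact s.star_mono _ _ (mul_ne_bot (span_singleton_ne_bot hb0) hA) (mul_ne_bot hA hB) hbA hmem

theorem star_star_mul {A B : Submodule D K} (hA : A ≠ ⊥) (hB : B ≠ ⊥) :
    s.star (s.star A * B) = s.star (A * B) := by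
  have hAB := mul_ne_bot hA hB
  apply le_antisymm
  · simpa only [s.star_star _ hAB] using
      s.star_mono _ _ (mul_ne_bot (s.star_ne_bot hA) hB) (s.star_ne_bot hAB) (s.star_mul_le hA hB)
  · exact s.star_mono _ _ hAB (mul_ne_bot (s.star_ne_bot hA) hB) (by gcongr; exact s.le_star A hA)

theorem star_le_finStar {E F : Submodule D K} (hF : F ≠ ⊥) (hFfg : F.FG) (hFE : F ≤ E) :
    s.star F ≤ finStar s.star E :=
  le_iSup₂_of_le F ⟨hF, hFfg, hFE⟩ le_rfl

theorem le_finStar (E : Submodule D K) : E ≤ finStar s.star E := by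
  intro x hx
  rcases eq_or_ne x 0 with rfl | hx0
  · exact zero_mem _
  exact s.star_le_finStar (span_singleton_ne_bot hx0) (fg_span_singleton x)
    ((span_singleton_le_iff_mem x E).mpr hx)
    (s.le_star _ (span_singleton_ne_bot hx0) (mem_span_singleton_self x))

theorem finStar_le_star {E : Submodule D K} (hE : E ≠ ⊥) : finStar s.star E ≤ s.star E :=
  iSup₂_le fun _ hF => s.star_mono _ _ hF.1 hE hF.2.2

theorem finStar_mono {E E' : Submodule D K} (h : E ≤ E') :
    finStar s.star E ≤ finStar s.star E' :=
  iSup₂_le fun _ hF => s.star_le_finStar hF.1 hF.2.1 (hF.2.2.trans h)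

/-- `⋆_f` is a directed union of the `G^⋆`, and a finitely generated `F` is a compact element. -/
theorem exists_fg_le_star_of_le_finStar {E F : Submodule D K} (hE : E ≠ ⊥) (hFfg : F.FG)
    (h : F ≤ finStar s.star E) : ∃ G, G ≠ ⊥ ∧ G.FG ∧ G ≤ E ∧ F ≤ s.star G := by
  set T : Set (Submodule D K) := {G | G ≠ ⊥ ∧ G.FG ∧ G ≤ E}
  have hcompact := (fg_iff_compact F).mp hFfg
  rw [CompleteLattice.isCompactElement_iff_le_of_directed_sSup_le] at hcompact
  obtain ⟨y, hy, hy0⟩ := (Submodule.ne_bot_iff E).mp hE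
  have hne : (s.star '' T).Nonempty :=
    ⟨_, Set.mem_image_of_mem _ ⟨span_singleton_ne_bot hy0, fg_span_singleton y,
      (span_singleton_le_iff_mem y E).mpr hy⟩⟩
  have hdir : DirectedOn (· ≤ ·) (s.star '' T) := by
    rintro _ ⟨G₁, hG₁, rfl⟩ _ ⟨G₂, hG₂, rfl⟩
    have hsup : G₁ ⊔ G₂ ∈ T := ⟨fun hbot => hG₁.1 (eq_bot_mono le_sup_left hbot),
      hG₁.2.1.sup hG₂.2.1, sup_le hG₁.2.2 hG₂.2.2⟩
    exact ⟨_, Set.mem_image_of_mem _ hsup, s.star_mono _ _ hG₁.1 hsup.1 le_sup_left,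
      s.star_mono _ _ hG₂.1 hsup.1 le_sup_right⟩
  obtain ⟨_, ⟨G, ⟨hG, hGfg, hGE⟩, rfl⟩, hFG⟩ :=
    hcompact _ hne hdir (by rwa [sSup_image])
  exact ⟨G, hG, hGfg, hGE, hFG⟩

theorem finStar_finStar {E : Submodule D K} (hE : E ≠ ⊥) :
    finStar s.star (finStar s.star E) = finStar s.star E := by
  refine le_antisymm (iSup₂_le fun F hF => ?_) (s.finStar_mono (s.le_finStar E))
  obtain ⟨G, hG, hGfg, hGE, hFG⟩ := s.exists_fg_le_star_of_le_finStar hE hF.2.1 hF.2.2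
  calc s.star F ≤ s.star G := by
        simpa only [s.star_star G hG] using s.star_mono _ _ hF.1 (s.star_ne_bot hG) hFG
    _ ≤ finStar s.star E := s.star_le_finStar hG hGfg hGE

theorem finStar_span_singleton_mul_le {x : K} (hx : x ≠ 0) (E : Submodule D K) :
    finStar s.star (span D {x} * E) ≤ span D {x} * finStar s.star E := by
  refine iSup₂_le fun F ⟨hF, hFfg, hFE⟩ => ?_
  have hG : span D {x⁻¹} * F ≠ ⊥ := mul_ne_bot (span_singleton_ne_bot (inv_ne_zero hx)) hF
  have hGE : span D {x⁻¹} * F ≤ E :=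
    calc span D {x⁻¹} * F ≤ span D {x⁻¹} * (span D {x} * E) := by gcongr
      _ = E := span_singleton_inv_mul_span_singleton_mul hx E
  calc s.star F = s.star (span D {x} * (span D {x⁻¹} * F)) := by
        rw [span_singleton_mul_span_singleton_inv_mul hx]
    _ = span D {x} * s.star (span D {x⁻¹} * F) := s.star_smul_mul x hx _ hG
    _ ≤ span D {x} * finStar s.star E := by
        gcongr
        exact s.star_le_finStar hG ((fg_span_singleton _).mul hFfg) hGE

theorem finStar_span_singleton_mul {x : K} (hx : x ≠ 0) (E : Submodule D K) :
    finStar s.star (span D {x} * E) = span D {x} * finStar s.star E := by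
  refine le_antisymm (s.finStar_span_singleton_mul_le hx E) ?_
  calc span D {x} * finStar s.star E
      = span D {x} * finStar s.star (span D {x⁻¹} * (span D {x} * E)) := by
        rw [span_singleton_inv_mul_span_singleton_mul hx]
    _ ≤ span D {x} * (span D {x⁻¹} * finStar s.star (span D {x} * E)) := by
        gcongr
        exact s.finStar_span_singleton_mul_le (inv_ne_zero hx) _
    _ = finStar s.star (span D {x} * E) := span_singleton_mul_span_singleton_inv_mul hx _

def fin : SemistarOp D K where
  star := finStar s.star
  star_smul_mul _ hx E _ := s.finStar_span_singleton_mul hx E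
  star_mono _ _ _ _ h := s.finStar_mono h
  le_star E _ := s.le_finStar E
  star_star _ hE := s.finStar_finStar hE

theorem star_finStar {E : Submodule D K} (hE : E ≠ ⊥) :
    s.star (finStar s.star E) = s.star E := by
  have hfin : finStar s.star E ≠ ⊥ := s.fin.star_ne_bot hE
  refine le_antisymm ?_ (s.star_mono _ _ hE hfin (s.le_finStar E))
  simpa only [s.star_star E hE] using
    s.star_mono _ _ hfin (s.star_ne_bot hE) (s.finStar_le_star hE)

theorem isStarInvertible_iff_forall_star_mul_one_div {F : Submodule D K} (hF : F ≠ ⊥)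
    (hF' : 1 / F ≠ ⊥) :
    IsStarInvertible s.star F ↔
      ∀ E : Submodule D K, E ≠ ⊥ → s.star (E * (1 / F)) = s.star E / F := by
  have hFF' := mul_ne_bot hF hF'
  constructor
  · intro hinv E hE
    apply le_antisymm
    · rw [Submodule.le_div_iff_mul_le]
      calc s.star (E * (1 / F)) * F ≤ s.star (E * (1 / F) * F) :=
            s.star_mul_le (mul_ne_bot hE hF') hF
        _ ≤ s.star E := s.star_mono _ _ (mul_ne_bot (mul_ne_bot hE hF') hF) hE <|
          calc E * (1 / F) * F = E * (1 / F * F) := mul_assoc _ _ _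
            _ ≤ E * 1 := by gcongr; exact div_mul_le 1 F
            _ = E := mul_one E
    · intro x hx
      rcases eq_or_ne x 0 with rfl | hx0
      · exact zero_mem _
      have hxF : span D {x} * F ≤ s.star E :=
        Submodule.le_div_iff_mul_le.mp ((span_singleton_le_iff_mem x _).mpr hx)
      have hx1 : x ∈ s.star (span D {x} * (F * (1 / F))) := by
        rw [s.star_smul_mul x hx0 _ hFF', hinv]
        exact mem_span_singleton_mul.mpr ⟨1, s.one_mem_star_one, mul_one x⟩
      rw [← s.star_star_mul hE hF']
      refine s.star_mono _ _ (mul_ne_bot (span_singleton_ne_bot hx0) hFF')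
        (mul_ne_bot (s.star_ne_bot hE) hF') ?_ hx1
      rw [← mul_assoc]
      gcongr
  · intro h
    apply le_antisymm (s.star_mono _ _ hFF' one_ne_bot mul_one_div_le_one)
    rw [h F hF, Submodule.le_div_iff_mul_le]
    simpa only [one_mul] using s.star_mul_le one_ne_bot hF

theorem star_le_of_star_mul_le {E : Submodule D K} (hE : E ≠ ⊥) (hE' : 1 / E ≠ ⊥)
    (hinv : IsStarInvertible s.star E) {F G : Submodule D K} (hF : F ≠ ⊥) (hG : G ≠ ⊥)
    (h : s.star (E * F) ≤ s.star (E * G)) : s.star F ≤ s.star G := by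
  have cancel : ∀ H : Submodule D K, H ≠ ⊥ → s.star (1 / E * s.star (E * H)) = s.star H :=
    fun H hH =>
    calc s.star (1 / E * s.star (E * H)) = s.star (s.star (E * H) * (1 / E)) := by rw [mul_comm]
      _ = s.star (E * (1 / E) * H) := by rw [s.star_star_mul (mul_ne_bot hE hH) hE']; ring_nf
      _ = s.star (s.star (E * (1 / E)) * H) := (s.star_star_mul (mul_ne_bot hE hE') hH).symm
      _ = s.star H := by rw [hinv, s.star_star_mul one_ne_bot hH, one_mul]
  rw [← cancel F hF, ← cancel G hG]
  exact s.star_mono _ _ (mul_ne_bot hE' (s.star_ne_bot (mul_ne_bot hE hF)))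
    (mul_ne_bot hE' (s.star_ne_bot (mul_ne_bot hE hG))) (by gcongr)

theorem isAB_of_isStarDomain [IsDomain D] [IsFractionRing D K] (h : IsStarDomain s.star) :
    IsAB s.star :=
  fun E hE hEfg _ _ hF hG =>
    s.star_le_of_star_mul_le hE (one_div_ne_bot hEfg) (h E hE hEfg) hF hG

theorem isQuasiStarIntegrallyClosed_of_isAB (h : IsAB s.star) :
    IsQuasiStarIntegrallyClosed s.star := by
  apply Set.Subset.antisymm
  · have hmul : s.star 1 * s.star 1 ≤ s.star 1 := by
      simpa only [one_mul, s.star_star 1 one_ne_bot] using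
        s.star_mul_le one_ne_bot (s.star_ne_bot one_ne_bot)
    exact fun x hx => Set.mem_iUnion₂.mpr ⟨1, ⟨one_ne_bot, one_eq_span (R := D) (A := K) ▸
      fg_span_singleton 1⟩, Submodule.le_div_iff_mul_le.mpr hmul hx⟩
  · intro x hx
    obtain ⟨F, ⟨hF, hFfg⟩, hxF⟩ := Set.mem_iUnion₂.mp hx
    rcases eq_or_ne x 0 with rfl | hx0
    · exact zero_mem _
    have hx' : span D {x} ≠ ⊥ := span_singleton_ne_bot hx0
    have hle : s.star (F * span D {x}) ≤ s.star (F * 1) := by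
      rw [mul_one, mul_comm, s.star_smul_mul x hx0 F hF]
      exact Submodule.le_div_iff_mul_le.mp ((span_singleton_le_iff_mem x _).mpr hxF)
    exact h F hF hFfg _ 1 hx' one_ne_bot hle (s.le_star _ hx' (mem_span_singleton_self x))

theorem isStarDomain_iff_forall_star_mul_one_div [IsDomain D] [IsFractionRing D K] :
    IsStarDomain s.star ↔ ∀ F : Submodule D K, F ≠ ⊥ → F.FG → ∀ E : Submodule D K, E ≠ ⊥ →
      s.star (E * (1 / F)) = s.star E / F :=
  forall₃_congr fun _ hF hFfg =>
    s.isStarInvertible_iff_forall_star_mul_one_div hF (one_div_ne_bot hFfg)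

theorem isPMD_iff_isStarDomain_finStar [IsDomain D] [IsFractionRing D K] :
    IsPMD s.star ↔ IsStarDomain (finStar s.star) := by
  refine ⟨fun h I hI hIfg => ?_, fun h I hI hIfg _ => h I hI hIfg⟩
  obtain ⟨c, hc, hc0⟩ := (Submodule.ne_bot_iff _).mp (one_div_ne_bot hIfg)
  have hcI : span D {c} * I ≤ 1 :=
    Submodule.le_div_iff_mul_le.mp ((span_singleton_le_iff_mem c _).mpr hc)
  have := h _ (mul_ne_bot (span_singleton_ne_bot hc0) hI) ((fg_span_singleton c).mul hIfg) hcI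
  rwa [IsStarInvertible, ← units_mul_mul_one_div (spanSingletonUnit hc0) I]

theorem isStarDomain_of_isStarDomain_finStar [IsDomain D] [IsFractionRing D K]
    (h : IsStarDomain (finStar s.star)) : IsStarDomain s.star := fun I hI hIfg =>
  have hII := mul_ne_bot hI (one_div_ne_bot hIfg)
  calc s.star (I * (1 / I))
      = s.star (finStar s.star (I * (1 / I))) := (s.star_finStar hII).symm
    _ = s.star (finStar s.star 1) := congrArg s.star (h I hI hIfg)
    _ = s.star 1 := s.star_finStar one_ne_bot

end SemistarOp

theorem statement5 {D K : Type*} [CommRing D] [IsDomain D] [Field K] [Algebra D K]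
    [IsFractionRing D K] (s : SemistarOp D K) :
    ((IsStarDomain s.star ↔
        (IsAB s.star ∧ ∀ F : Submodule D K, F ≠ ⊥ → F.FG → ∀ E : Submodule D K, E ≠ ⊥ →
          s.star (E * (1 / F)) = s.star E / F)) ∧
      (IsStarDomain s.star ↔
        (IsQuasiStarIntegrallyClosed s.star ∧
          ∀ F : Submodule D K, F ≠ ⊥ → F.FG → ∀ E : Submodule D K, E ≠ ⊥ →
            s.star (E * (1 / F)) = s.star E / F))) ∧
    ((IsPStarMD s ↔
        (IsAB s.star ∧ ∀ F : Submodule D K, F ≠ ⊥ → F.FG → ∀ E : Submodule D K, E ≠ ⊥ →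
          finStar s.star (E * (1 / F)) = finStar s.star E / F)) ∧
      (IsPStarMD s ↔
        (IsQuasiStarIntegrallyClosed s.star ∧
          ∀ F : Submodule D K, F ≠ ⊥ → F.FG → ∀ E : Submodule D K, E ≠ ⊥ →
            finStar s.star (E * (1 / F)) = finStar s.star E / F))) := by
  have hDomain := s.isStarDomain_iff_forall_star_mul_one_div
  have hPMD : IsPStarMD s ↔ ∀ F : Submodule D K, F ≠ ⊥ → F.FG → ∀ E : Submodule D K, E ≠ ⊥ →
      finStar s.star (E * (1 / F)) = finStar s.star E / F :=
    s.isPMD_iff_isStarDomain_finStar.trans s.fin.isStarDomain_iff_forall_star_mul_one_div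
  have hAB : IsStarDomain s.star → IsAB s.star := s.isAB_of_isStarDomain
  have hQIC : IsAB s.star → IsQuasiStarIntegrallyClosed s.star :=
    s.isQuasiStarIntegrallyClosed_of_isAB
  have hPMD_AB : IsPStarMD s → IsAB s.star := fun h =>
    hAB (s.isStarDomain_of_isStarDomain_finStar (s.isPMD_iff_isStarDomain_finStar.mp h))
  tauto

end Semistar
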